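/- arXiv:2412.08399 — 2 statements merged into one kernel-verified Lean document; each statement's English description precedes it below -/
import Mathlib

section
/- With the sets D_n defined by the recursive Mex algorithm, for every n ≥ 1 one has Mex(D_n) - Mex(D_{n-1}) ∈ {1, 2, 3, 4}. -/
/-- Minimum excluded value of a set of natural numbers. -/
noncomputable def mex (S : Set ℕ) : ℕ := sInf {m : ℕ | m ∉ S}

/-- Coordinates of a set of triples. -/
def coords (G : Set (ℕ × ℕ × ℕ)) : Set ℕ :=
  {k | ∃ x ∈ G, k = x.1 ∨ k = x.2.1 ∨ k = x.2.2}

/-- Pairwise coordinate differences of a set of triples. -/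
def diffs (G : Set (ℕ × ℕ × ℕ)) : Set ℕ :=
  {d | ∃ x ∈ G, d = x.2.1 - x.1 ∨ d = x.2.2 - x.2.1 ∨ d = x.2.2 - x.1}

/-- One step of the Mex algorithm: the next P-position. -/
noncomputable def step (G : Set (ℕ × ℕ × ℕ)) : ℕ × ℕ × ℕ :=
  let F := coords G
  let D := diffs G
  let a := mex F
  let b := mex ((fun d => a + d) '' D ∪ Set.Icc 1 a ∪ F)
  let c := mex ((fun d => b + d) '' D ∪ Set.Icc 1 b ∪ F)
  (a, b, c)

/-- The sets `G_n` of P-positions computed by the Mex algorithm. -/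
noncomputable def Gset : ℕ → Set (ℕ × ℕ × ℕ)
  | 0 => {(0, 0, 0)}
  | n + 1 => Gset n ∪ {step (Gset n)}

/-- The `n`-th P-position `(v_1(n), v_2(n), v_3(n))`. -/
noncomputable def v : ℕ → ℕ × ℕ × ℕ
  | 0 => (0, 0, 0)
  | n + 1 => step (Gset n)

noncomputable def v1 (n : ℕ) : ℕ := (v n).1
noncomputable def v2 (n : ℕ) : ℕ := (v n).2.1
noncomputable def v3 (n : ℕ) : ℕ := (v n).2.2

/-- `F_n`: the set of coordinates of elements of `G_n`. -/
noncomputable def Fset (n : ℕ) : Set ℕ := coords (Gset n)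

/-- `D_n`: the set of pairwise coordinate differences over `G_n`. -/
noncomputable def Dset (n : ℕ) : Set ℕ := diffs (Gset n)

/-! Write `a = mex F_n` and `d = mex D_n`. The next position is `(a, b, b + d)` with
`a + d ≤ b ≤ a + d + 2`, so `D_{n+1} = D_n ∪ {b - a, d, b - a + d}`: it gains `d`, hence its mex
grows. For the upper bound one carries an invariant: every element of `D_n` is at most `2d - 2`
and no two consecutive ones are `≥ d`, so of `d + 3` and `d + 4` at most one lies in `D_{n+1}`.
Pinning down `b` and `c` needs the matching fact on `F_n`: its elements from `a + d` on
(earlier third coordinates) are at least `3` apart, and all of `F_n` lies below `a + 2d - 2`. -/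

section Mex

variable {S : Set ℕ} {k : ℕ}

lemma mex_le_of_notMem (h : k ∉ S) : mex S ≤ k := Nat.sInf_le h

lemma mem_of_lt_mex (h : k < mex S) : k ∈ S := not_not.1 (Nat.notMem_of_lt_sInf h)

lemma mex_notMem (hS : S.Finite) : mex S ∉ S :=
  Nat.sInf_mem (s := Sᶜ) hS.infinite_compl.nonempty

lemma le_mex_of_forall_lt_mem (hS : S.Finite) (h : ∀ y < k, y ∈ S) : k ≤ mex S :=
  not_lt.1 fun hlt => mex_notMem hS (h _ hlt)

lemma mex_pos (hS : S.Finite) (h0 : 0 ∈ S) : 0 < mex S :=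
  le_mex_of_forall_lt_mem hS fun y hy => by rwa [Nat.lt_one_iff.1 hy]

lemma mex_singleton_zero : mex {0} = 1 :=
  le_antisymm (mex_le_of_notMem (by simp))
    (le_mex_of_forall_lt_mem (Set.finite_singleton 0) fun y hy => by simpa using hy)

end Mex

/-- `v_2(n+1) = mex (blocked D_n F_n v_1(n+1))` and `v_3(n+1) = mex (blocked D_n F_n v_2(n+1))`. -/
def blocked (D F : Set ℕ) (a : ℕ) : Set ℕ := (fun d => a + d) '' D ∪ Set.Icc 1 a ∪ F

section Blocked

variable {D F : Set ℕ} {a k : ℕ}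

lemma blocked_finite (hD : D.Finite) (hF : F.Finite) (a : ℕ) : (blocked D F a).Finite :=
  ((hD.image _).union (Set.finite_Icc _ _)).union hF

lemma add_mem_blocked_iff (hk : 0 < k) : a + k ∈ blocked D F a ↔ k ∈ D ∨ a + k ∈ F := by
  simp only [blocked, Set.mem_union, Set.mem_image, Set.mem_Icc, add_right_inj, exists_eq_right,
    add_le_iff_nonpos_right, nonpos_iff_eq_zero, hk.ne', and_false, or_false]

lemma add_mex_le_mex_blocked (hD : D.Finite) (hF : F.Finite) (h0F : 0 ∈ F) (a : ℕ) :
    a + mex D ≤ mex (blocked D F a) :=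
  le_mex_of_forall_lt_mem (blocked_finite hD hF a) fun y hy => by
    rcases Nat.eq_zero_or_pos y with rfl | hy0
    · exact Or.inr h0F
    by_cases hya : y ≤ a
    · exact Or.inl (Or.inr ⟨hy0, hya⟩)
    · obtain ⟨k, rfl⟩ := Nat.exists_eq_add_of_le (not_le.1 hya).le
      exact (add_mem_blocked_iff (by omega)).2 (Or.inl (mem_of_lt_mex (S := D) (by omega)))

lemma mex_blocked_eq_add_mex (hD : D.Finite) (hF : F.Finite) (h0D : 0 ∈ D) (h0F : 0 ∈ F)
    (hlt : ∀ x ∈ F, x < a + mex D) : mex (blocked D F a) = a + mex D := by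
  refine le_antisymm (mex_le_of_notMem ?_) (add_mex_le_mex_blocked hD hF h0F a)
  rw [add_mem_blocked_iff (mex_pos hD h0D)]
  rintro (h | h)
  · exact mex_notMem hD h
  · exact lt_irrefl _ (hlt _ h)

lemma mex_blocked_le (hD : D.Finite) (h0D : 0 ∈ D)
    (hspaced : ∀ x ∈ F, ∀ y ∈ F, a + mex D ≤ x → x < y → x + 3 ≤ y)
    (hiso : ∀ x ∈ D, mex D ≤ x → x + 1 ∉ D) :
    mex (blocked D F a) ≤ a + mex D + 2 := by
  have hd := mex_pos hD h0D
  by_cases h0 : a + mex D ∈ F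
  · have hF : ∀ j, 0 < j → j ≤ 2 → a + (mex D + j) ∉ F := fun j _ _ h =>
      absurd (hspaced _ h0 _ h le_rfl (by omega)) (by omega)
    by_cases h1 : mex D + 1 ∈ D
    · refine (mex_le_of_notMem ?_).trans (by omega : a + (mex D + 2) ≤ _)
      rw [add_mem_blocked_iff (by omega)]
      exact not_or.2 ⟨hiso _ h1 (by omega), hF 2 (by omega) le_rfl⟩
    · refine (mex_le_of_notMem ?_).trans (by omega : a + (mex D + 1) ≤ _)
      rw [add_mem_blocked_iff (by omega)]
      exact not_or.2 ⟨h1, hF 1 (by omega) (by omega)⟩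
  · refine (mex_le_of_notMem ?_).trans (by omega : a + mex D ≤ _)
    rw [add_mem_blocked_iff hd]
    exact not_or.2 ⟨mex_notMem hD, h0⟩

lemma succ_mex_mem_of_lt_mex_blocked (hD : D.Finite) (h0D : 0 ∈ D)
    (hspaced : ∀ x ∈ F, ∀ y ∈ F, a + mex D ≤ x → x < y → x + 3 ≤ y)
    (hlt : a + mex D + 1 < mex (blocked D F a)) : mex D + 1 ∈ D := by
  have hd := mex_pos hD h0D
  have h0 : a + mex D ∈ F :=
    ((add_mem_blocked_iff hd).1 (mem_of_lt_mex (by omega))).resolve_left (mex_notMem hD)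
  refine ((add_mem_blocked_iff (by omega)).1 (mem_of_lt_mex (by omega))).resolve_right fun h1 => ?_
  exact absurd (hspaced _ h0 _ h1 le_rfl (by omega)) (by omega)

end Blocked

structure SparseAboveMex (D : Set ℕ) : Prop where
  finite : D.Finite
  zero_mem : 0 ∈ D
  add_two_le : ∀ x ∈ D, x + 2 ≤ 2 * mex D
  succ_notMem : ∀ x ∈ D, mex D ≤ x → x + 1 ∉ D

namespace SparseAboveMex

variable {D : Set ℕ} {e : ℕ}

lemma union_finite (h : SparseAboveMex D) (e : ℕ) : (D ∪ {e, mex D, e + mex D}).Finite :=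
  h.finite.union (Set.toFinite _)

lemma lt_mex_union (h : SparseAboveMex D) (he : mex D ≤ e) (he' : e ≤ mex D + 2)
    (hgap : mex D + 1 < e → mex D + 1 ∈ D) : e < mex (D ∪ {e, mex D, e + mex D}) := by
  refine le_mex_of_forall_lt_mem (h.union_finite e) fun y hy => ?_
  simp only [Set.mem_union, Set.mem_insert_iff, Set.mem_singleton_iff]
  rcases lt_or_ge y (mex D) with hyd | hyd
  · exact Or.inl (mem_of_lt_mex hyd)
  · rcases (by omega : y = mex D ∨ y = e ∨ (y = mex D + 1 ∧ mex D + 1 < e))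
      with hy | hy | ⟨rfl, hlt⟩
    · exact Or.inr (Or.inr (Or.inl hy))
    · exact Or.inr (Or.inl hy)
    · exact Or.inl (hgap hlt)

lemma mex_union_le (h : SparseAboveMex D) (he : mex D ≤ e) (he' : e ≤ mex D + 2) :
    mex (D ∪ {e, mex D, e + mex D}) ≤ mex D + 4 := by
  have hmax := h.add_two_le
  by_cases h3 : mex D + 3 ∈ D
  · -- then `mex D ≥ 5`, so the new element `e + mex D` is beyond `mex D + 4`
    have := hmax _ h3
    refine mex_le_of_notMem ?_
    simp only [Set.mem_union, Set.mem_insert_iff, Set.mem_singleton_iff, not_or]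
    exact ⟨h.succ_notMem _ h3 (by omega), by omega, by omega, by omega⟩
  · by_cases he3 : e = 3
    · refine mex_le_of_notMem ?_
      simp only [Set.mem_union, Set.mem_insert_iff, Set.mem_singleton_iff, not_or]
      exact ⟨fun h4 => absurd (hmax _ h4) (by omega), by omega, by omega, by omega⟩
    · refine (mex_le_of_notMem ?_).trans (by omega : mex D + 3 ≤ mex D + 4)
      simp only [Set.mem_union, Set.mem_insert_iff, Set.mem_singleton_iff, not_or]
      exact ⟨h3, by omega, by omega, by omega⟩

lemma union (h : SparseAboveMex D) (he : mex D ≤ e) (he' : e ≤ mex D + 2)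
    (hgap : mex D + 1 < e → mex D + 1 ∈ D) : SparseAboveMex (D ∪ {e, mex D, e + mex D}) := by
  have hlt := h.lt_mex_union he he' hgap
  have hmax := h.add_two_le
  have high : ∀ x ∈ D ∪ {e, mex D, e + mex D}, mex (D ∪ {e, mex D, e + mex D}) ≤ x →
      x ∈ D ∨ x = e + mex D := by
    simp only [Set.mem_union, Set.mem_insert_iff, Set.mem_singleton_iff]
    rintro x (hx | rfl | rfl | rfl) hle <;> first | exact Or.inl hx | omega
  refine ⟨h.union_finite e, Or.inl h.zero_mem, fun x hx => ?_, fun x hx hle hx1 => ?_⟩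
  · simp only [Set.mem_union, Set.mem_insert_iff, Set.mem_singleton_iff] at hx
    rcases hx with hx | rfl | rfl | rfl
    · have := hmax x hx
      omega
    all_goals omega
  · rcases high x hx hle with hx | hx <;> rcases high (x + 1) hx1 (by omega) with hx1 | hx1
    · exact h.succ_notMem x hx (by omega) hx1
    · have := hmax x hx
      omega
    · have := hmax _ hx1
      omega
    · omega

end SparseAboveMex

lemma spaced_union {F : Set ℕ} {t t' a b c : ℕ}
    (hspaced : ∀ x ∈ F, ∀ y ∈ F, t ≤ x → x < y → x + 3 ≤ y) (hc : ∀ x ∈ F, x + 3 ≤ c)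
    (ht : t ≤ t') (ha : a < t') (hb : b < t') :
    ∀ x ∈ F ∪ {a, b, c}, ∀ y ∈ F ∪ {a, b, c}, t' ≤ x → x < y → x + 3 ≤ y := by
  have high : ∀ x ∈ F ∪ {a, b, c}, t' ≤ x → x ∈ F ∨ x = c := by
    simp only [Set.mem_union, Set.mem_insert_iff, Set.mem_singleton_iff]
    rintro x (hx | rfl | rfl | rfl) hx' <;> first | exact Or.inl hx | omega
  intro x hx y hy hxt hxy
  rcases high x hx hxt with hxF | rfl <;> rcases high y hy (by omega) with hyF | rfl
  · exact hspaced x hxF y hyF (by omega) hxy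
  · exact hc x hxF
  · exact absurd (hc y hyF) (by omega)
  · omega

structure MexInvariant (F D : Set ℕ) : Prop where
  sparse : SparseAboveMex D
  finite : F.Finite
  zero_mem : 0 ∈ F
  add_three_le : ∀ x ∈ F, x + 3 ≤ mex F + 2 * mex D
  spaced : ∀ x ∈ F, ∀ y ∈ F, mex F + mex D ≤ x → x < y → x + 3 ≤ y

namespace MexInvariant

variable {F D : Set ℕ} {a b c : ℕ}

theorem step (h : MexInvariant F D) (ha : a = mex F) (hb : b = mex (blocked D F a))
    (hc : c = mex (blocked D F b)) :
    MexInvariant (F ∪ {a, b, c}) (D ∪ {b - a, c - b, c - a}) ∧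
      mex D < mex (D ∪ {b - a, c - b, c - a}) ∧ mex (D ∪ {b - a, c - b, c - a}) ≤ mex D + 4 := by
  obtain ⟨hD, hF, h0F, hle, hspaced⟩ := h
  rw [← ha] at hle hspaced
  have hab : a + mex D ≤ b := hb ▸ add_mex_le_mex_blocked hD.finite hF h0F a
  have hb2 : b ≤ a + mex D + 2 := hb ▸ mex_blocked_le hD.finite hD.zero_mem hspaced hD.succ_notMem
  have hgap : a + mex D + 1 < b → mex D + 1 ∈ D :=
    hb ▸ succ_mex_mem_of_lt_mex_blocked hD.finite hD.zero_mem hspaced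
  have hcb : c = b + mex D := hc ▸ mex_blocked_eq_add_mex hD.finite hF hD.zero_mem h0F
    fun x hx => by have := hle x hx; omega
  obtain ⟨e, rfl⟩ := Nat.exists_eq_add_of_le (le_of_add_le_left hab)
  rw [show a + e - a = e by omega, show c - (a + e) = mex D by omega,
    show c - a = e + mex D by omega]
  have he : e < mex (D ∪ {e, mex D, e + mex D}) :=
    hD.lt_mex_union (by omega) (by omega) fun hlt => hgap (by omega)
  have ha' : a < mex (F ∪ {a, a + e, c}) :=
    le_mex_of_forall_lt_mem (hF.union (Set.toFinite _)) fun y hy =>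
      (Nat.lt_succ_iff_lt_or_eq.1 hy).elim (fun hy => Or.inl (mem_of_lt_mex (ha ▸ hy)))
        fun hy => Or.inr (Or.inl hy)
  refine ⟨⟨hD.union (by omega) (by omega) fun hlt => hgap (by omega), hF.union (Set.toFinite _),
    Or.inl h0F, fun x hx => ?_, spaced_union hspaced (fun x hx => ?_) (by omega) (by omega)
    (by omega)⟩, by omega, hD.mex_union_le (by omega) (by omega)⟩
  · simp only [Set.mem_union, Set.mem_insert_iff, Set.mem_singleton_iff] at hx
    rcases hx with hx | rfl | rfl | rfl
    · have := hle x hx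
      omega
    all_goals omega
  · have := hle x hx
    omega

end MexInvariant

lemma coords_union_singleton (G : Set (ℕ × ℕ × ℕ)) (p : ℕ × ℕ × ℕ) :
    coords (G ∪ {p}) = coords G ∪ {p.1, p.2.1, p.2.2} := by
  ext k
  simp [coords, or_and_right, exists_or, or_assoc]

lemma diffs_union_singleton (G : Set (ℕ × ℕ × ℕ)) (p : ℕ × ℕ × ℕ) :
    diffs (G ∪ {p}) = diffs G ∪ {p.2.1 - p.1, p.2.2 - p.2.1, p.2.2 - p.1} := by
  ext k
  simp [diffs, or_and_right, exists_or, or_assoc]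

lemma MexInvariant.succ {n : ℕ} (h : MexInvariant (Fset n) (Dset n)) :
    MexInvariant (Fset (n + 1)) (Dset (n + 1)) ∧
      mex (Dset n) < mex (Dset (n + 1)) ∧ mex (Dset (n + 1)) ≤ mex (Dset n) + 4 := by
  rw [Fset, Dset, Gset, coords_union_singleton, diffs_union_singleton]
  exact h.step rfl rfl rfl

lemma mexInvariant_zero : MexInvariant (Fset 0) (Dset 0) := by
  have hF : Fset 0 = {0} := by ext; simp [Fset, Gset, coords]
  have hD : Dset 0 = {0} := by ext; simp [Dset, Gset, diffs]
  rw [hF, hD]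
  refine ⟨⟨Set.finite_singleton 0, rfl, ?_, ?_⟩, Set.finite_singleton 0, rfl, ?_, ?_⟩ <;>
    simp [mex_singleton_zero]

lemma mexInvariant : ∀ n, MexInvariant (Fset n) (Dset n)
  | 0 => mexInvariant_zero
  | n + 1 => (mexInvariant n).succ.1

theorem stmt13 : ∀ n : ℕ, 1 ≤ n →
    (mex (Dset n) : ℤ) - mex (Dset (n - 1)) ∈ ({1, 2, 3, 4} : Set ℤ) := by
  intro n hn
  obtain ⟨m, rfl⟩ := Nat.exists_eq_add_of_le' hn
  obtain ⟨-, hlt, hle⟩ := (mexInvariant m).succ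
  simp only [Nat.add_sub_cancel, Set.mem_insert_iff, Set.mem_singleton_iff]
  omega
end

section
/- The polynomial 8x⁵ − 44x⁴ + 54x³ + 39x² − 60x − 22 is irreducible over ℚ. -/
/-!
Substituting `X ↦ X / 8` and clearing denominators turns `P = 8X⁵ − 44X⁴ + 54X³ + 39X² − 60X − 22`
into the monic integral quintic `Q = 8⁴ P(X/8)`, which is irreducible over `ℚ` iff `P` is. By Gauss's
lemma it suffices that `Q` is irreducible over `ℤ`, and for a monic polynomial this follows from
irreducibility of its reduction `X⁵ + X⁴ + 2` modulo 3. Over `𝔽₃` a quintic is reducible only if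
it has a root or a monic quadratic factor; both are excluded by a finite search.
-/

open Polynomial

namespace Polynomial

/-- The right-hand sides are the coefficients of `(X² + bX + c) * (X³ + dX² + eX + k)`. -/
theorem Monic.exists_coeff_eq_of_quadratic_dvd {R : Type*} [CommRing R] {p q : R[X]}
    (hp : p.Monic) (hp5 : p.natDegree = 5) (hq : q.Monic) (hq2 : q.natDegree = 2) (hqp : q ∣ p) :
    ∃ b c d e k : R, p.coeff 4 = b + d ∧ p.coeff 3 = c + b * d + e ∧
      p.coeff 2 = c * d + b * e + k ∧ p.coeff 1 = c * e + b * k ∧ p.coeff 0 = c * k := by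
  obtain ⟨r, rfl⟩ := hqp
  have hr : r.Monic := hq.of_mul_monic_left hp
  have hr3 : r.natDegree = 3 := by
    rw [hq.natDegree_mul hr, hq2] at hp5
    omega
  have hq2' : q.coeff 2 = 1 := hq2 ▸ hq.coeff_natDegree
  have hr3' : r.coeff 3 = 1 := hr3 ▸ hr.coeff_natDegree
  have hq3 : q.coeff 3 = 0 := coeff_eq_zero_of_natDegree_lt (by omega)
  have hq4 : q.coeff 4 = 0 := coeff_eq_zero_of_natDegree_lt (by omega)
  have hr4 : r.coeff 4 = 0 := coeff_eq_zero_of_natDegree_lt (by omega)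
  refine ⟨q.coeff 1, q.coeff 0, r.coeff 2, r.coeff 1, r.coeff 0, ?_⟩
  simp only [coeff_mul, Finset.Nat.sum_antidiagonal_eq_sum_range_succ_mk, Finset.sum_range_succ,
    Finset.sum_range_zero, hq2', hr3', hq3, hq4, hr4]
  refine ⟨?_, ?_, ?_, ?_, ?_⟩ <;> ring

theorem Monic.irreducible_of_natDegree_eq_five {R : Type*} [CommRing R] [NoZeroDivisors R]
    {p : R[X]} (hp : p.Monic) (hp5 : p.natDegree = 5) (hroot : ∀ a, ¬ p.IsRoot a)
    (hquad : ¬ ∃ b c d e k : R, p.coeff 4 = b + d ∧ p.coeff 3 = c + b * d + e ∧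
      p.coeff 2 = c * d + b * e + k ∧ p.coeff 1 = c * e + b * k ∧ p.coeff 0 = c * k) :
    Irreducible p := by
  refine (hp.irreducible_iff_lt_natDegree_lt fun h => by simp [h] at hp5).2
    fun q hq hdeg hqp => ?_
  rw [hp5, Finset.mem_Ioc] at hdeg
  obtain hlin | hquadratic : q.natDegree = 1 ∨ q.natDegree = 2 := by omega
  · rw [hq.eq_X_add_C hlin, ← sub_neg_eq_add, ← map_neg C, dvd_iff_isRoot] at hqp
    exact hroot _ hqp
  · exact hquad (hp.exists_coeff_eq_of_quadratic_dvd hp5 hq hquadratic hqp)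

theorem irreducible_comp_C_mul_X_iff {K : Type*} [Field K] {a : K} (ha : a ≠ 0) (p : K[X]) :
    Irreducible (p.comp (C a * X)) ↔ Irreducible p := by
  have : Invertible a := invertibleOfNonzero ha
  simpa [comp_eq_aeval] using MulEquiv.irreducible_iff (algEquivCMulXAddC a 0) (x := p)

end Polynomial

theorem irreducible_X_pow_five_add_X_pow_four_add_two :
    Irreducible (X ^ 5 + X ^ 4 + 2 : (ZMod 3)[X]) := by
  refine Monic.irreducible_of_natDegree_eq_five (by monicity!) (by compute_degree!) ?_ ?_
  · intro a
    simp only [IsRoot, eval_add, eval_pow, eval_X, eval_ofNat]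
    revert a
    decide
  · simp only [coeff_add, coeff_X_pow, coeff_ofNat_zero, coeff_ofNat_succ]
    decide

/-- `8⁴ P(X/8)`. -/
noncomputable def scaledQuintic : ℤ[X] :=
  X ^ 5 - 44 * X ^ 4 + 432 * X ^ 3 + 2496 * X ^ 2 - 30720 * X - 90112

theorem scaledQuintic_monic : scaledQuintic.Monic := by
  unfold scaledQuintic
  monicity!

theorem map_scaledQuintic_zmod_three :
    scaledQuintic.map (Int.castRingHom (ZMod 3)) = X ^ 5 + X ^ 4 + 2 := by
  have h3 : (3 : (ZMod 3)[X]) = 0 := CharP.ofNat_eq_zero _ 3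
  simp only [scaledQuintic, Polynomial.map_sub, Polynomial.map_add, Polynomial.map_mul,
    Polynomial.map_pow, Polynomial.map_X, Polynomial.map_ofNat]
  linear_combination (-15 * X ^ 4 + 144 * X ^ 3 + 832 * X ^ 2 - 10240 * X - 30038) * h3

theorem irreducible_map_scaledQuintic_rat :
    Irreducible (scaledQuintic.map (algebraMap ℤ ℚ)) :=
  scaledQuintic_monic.irreducible_iff_irreducible_map_fraction_map.mp <|
    scaledQuintic_monic.irreducible_of_irreducible_map (Int.castRingHom (ZMod 3)) _ <|
      map_scaledQuintic_zmod_three ▸ irreducible_X_pow_five_add_X_pow_four_add_two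

theorem stmt17 :
    Irreducible (C (8 : ℚ) * X ^ 5 - C 44 * X ^ 4 + C 54 * X ^ 3 +
      C 39 * X ^ 2 - C 60 * X - C 22) := by
  have hunit : (C 4096⁻¹ : ℚ[X]) * 4096 = 1 := by
    rw [← C_ofNat, ← C_mul]
    norm_num
  have hscale : C (8 : ℚ) * X ^ 5 - C 44 * X ^ 4 + C 54 * X ^ 3 + C 39 * X ^ 2 - C 60 * X - C 22 =
      C 4096⁻¹ * (scaledQuintic.map (algebraMap ℤ ℚ)).comp (C 8 * X) := by
    simp only [scaledQuintic, Polynomial.map_sub, Polynomial.map_add, Polynomial.map_mul,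
      Polynomial.map_pow, Polynomial.map_X, Polynomial.map_ofNat, sub_comp, add_comp, mul_comp,
      pow_comp, X_comp, ofNat_comp, map_ofNat C]
    linear_combination
      (-(8 * X ^ 5 - 44 * X ^ 4 + 54 * X ^ 3 + 39 * X ^ 2 - 60 * X - 22 : ℚ[X])) * hunit
  rw [hscale, irreducible_isUnit_mul (isUnit_C.mpr (by norm_num)),
    irreducible_comp_C_mul_X_iff (by norm_num)]
  exact irreducible_map_scaledQuintic_rat
end
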